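/- For a connected graph G, χ_{μ_i}(G) = 2 if and only if G is bipartite and 1 ≤ diam(G) ≤ 3. -/

import Mathlib

open SimpleGraph

variable {V W : Type*}

/-- Two vertices of `X` are `X`-visible if some geodesic between them has all
internal vertices outside `X`; `X` is a mutual-visibility set if this holds
for every reachable pair of vertices of `X`. -/
def IsMVSet (G : SimpleGraph V) (X : Set V) : Prop :=
  ∀ x ∈ X, ∀ y ∈ X, x ≠ y → G.Reachable x y →
    ∃ p : G.Walk x y, p.length = G.dist x y ∧
      ∀ z ∈ p.support, z ≠ x → z ≠ y → z ∉ X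

/-- An independent mutual-visibility set. -/
def IsIMVSet (G : SimpleGraph V) (X : Set V) : Prop :=
  (∀ x ∈ X, ∀ y ∈ X, ¬ G.Adj x y) ∧ IsMVSet G X

/-- The mutual-visibility chromatic number: the least `k` such that the vertex
set partitions into `k` mutual-visibility sets. -/
noncomputable def mvChrom (G : SimpleGraph V) : ℕ :=
  sInf {k | ∃ f : V → Fin k, ∀ i, IsMVSet G (f ⁻¹' {i})}

/-- The independent mutual-visibility chromatic number. -/
noncomputable def imvChrom (G : SimpleGraph V) : ℕ :=
  sInf {k | ∃ f : V → Fin k, ∀ i, IsIMVSet G (f ⁻¹' {i})}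

/-- The chromatic number, as a natural number. -/
noncomputable def chromNat (G : SimpleGraph V) : ℕ :=
  sInf {k | G.Colorable k}

/-- The independent mutual-visibility number `μᵢ(G)`. -/
noncomputable def imvNum (G : SimpleGraph V) : ℕ :=
  sSup {n | ∃ s : Finset V, IsIMVSet G ↑s ∧ s.card = n}

/-- The independence number `α(G)`. -/
noncomputable def indepNum (G : SimpleGraph V) : ℕ :=
  sSup {n | ∃ s : Finset V, (∀ x ∈ s, ∀ y ∈ s, ¬ G.Adj x y) ∧ s.card = n}

/-!
Along any walk a proper 2-colouring alternates, so the colour of the `n`-th vertex is decided by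
the parity of `n`. If the diameter is at most 3, two distinct vertices of one colour class are at
distance exactly 2 and the middle vertex of a geodesic between them has the other colour: the
colour classes of a bipartition are independent mutual-visibility sets. Conversely, an
independent mutual-visibility 2-colouring is a proper colouring, and if `d(u, v) ≥ 4` then the
vertex `w` at distance 4 from `u` on a geodesic has the colour of `u`, while every `u`–`w`
geodesic passes through a vertex at distance 2 from `u`, of the same colour again, which blocks
visibility. One colour is enough exactly when there are no edges, i.e. for a connected graph on
one vertex.
-/

namespace SimpleGraph

section

variable {G : SimpleGraph V} {u v : V}

lemma Coloring.eq_getVert_iff_even (C : G.Coloring (Fin 2)) (p : G.Walk u v) (n : ℕ) :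
    C u = C (p.getVert n) ↔ Even (min n p.length) := by
  let B : G.Coloring Bool := G.recolorOfEquiv finTwoEquiv C
  have hB : ∀ x y, C x = C y ↔ (B x ↔ B y) := fun x y => by
    rw [← Bool.eq_iff_iff, ← finTwoEquiv.injective.eq_iff]
    rfl
  rw [hB, ← B.even_length_iff_congr (p.take n), Walk.take_length]

lemma Walk.dist_getVert_left {p : G.Walk u v} (hp : p.length = G.dist u v) (n : ℕ) :
    G.dist u (p.getVert n) = min n p.length := by
  rw [← length_eq_dist_of_subwalk hp (p.isSubwalk_take n), take_length]

lemma Walk.dist_getVert_right {p : G.Walk u v} (hp : p.length = G.dist u v) (n : ℕ) :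
    G.dist (p.getVert n) v = p.length - n := by
  rw [← length_eq_dist_of_subwalk hp (p.isSubwalk_drop n), drop_length]

end

end SimpleGraph

lemma Set.Subsingleton.isIMVSet {G : SimpleGraph V} {X : Set V} (hX : X.Subsingleton) :
    IsIMVSet G X :=
  ⟨fun _ hx _ hy h => h.ne (hX hx hy),
    fun _ hx _ hy hne _ => absurd (hX hx hy) hne⟩

def IsIMVColoring {k : ℕ} (G : SimpleGraph V) (f : V → Fin k) : Prop :=
  ∀ i, IsIMVSet G (f ⁻¹' {i})

section

variable {G : SimpleGraph V}

lemma IsIMVColoring.castLE {k l : ℕ} {f : V → Fin k} (hf : IsIMVColoring G f) (h : k ≤ l) :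
    IsIMVColoring G (Fin.castLE h ∘ f) := by
  intro i
  by_cases hi : ∃ j, Fin.castLE h j = i
  · obtain ⟨j, rfl⟩ := hi
    have hpre : (Fin.castLE h ∘ f) ⁻¹' {Fin.castLE h j} = f ⁻¹' {j} := by
      ext x
      simp [Fin.castLE_inj]
    exact hpre ▸ hf j
  · have hpre : (Fin.castLE h ∘ f) ⁻¹' {i} = ∅ :=
      Set.eq_empty_of_forall_notMem fun x hx => hi ⟨f x, hx⟩
    exact hpre ▸ Set.subsingleton_empty.isIMVSet

lemma imvChrom_eq_succ_iff (k : ℕ) :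
    imvChrom G = k + 1 ↔
      (∃ f : V → Fin (k + 1), IsIMVColoring G f) ∧
        ¬ ∃ f : V → Fin k, IsIMVColoring G f :=
  Nat.sInf_upward_closed_eq_succ_iff (s := {k | ∃ f : V → Fin k, IsIMVColoring G f})
    (fun _ _ h ⟨_, hf⟩ => ⟨_, hf.castLE h⟩) k

lemma IsIMVColoring.ne_of_adj {k : ℕ} {f : V → Fin k} (hf : IsIMVColoring G f) {a b : V}
    (h : G.Adj a b) : f a ≠ f b :=
  fun hab => (hf (f a)).1 a rfl b hab.symm h

def IsIMVColoring.toColoring {k : ℕ} {f : V → Fin k} (hf : IsIMVColoring G f) :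
    G.Coloring (Fin k) :=
  SimpleGraph.Coloring.mk f hf.ne_of_adj

lemma SimpleGraph.Connected.exists_isIMVColoring_fin_one_iff (hconn : G.Connected) :
    (∃ f : V → Fin 1, IsIMVColoring G f) ↔ Subsingleton V := by
  refine ⟨fun ⟨f, hf⟩ => ?_,
    fun _ => ⟨fun _ => 0, fun _ => Set.subsingleton_of_subsingleton.isIMVSet⟩⟩
  by_contra hV
  rw [not_subsingleton_iff_nontrivial] at hV
  obtain ⟨w, hvw⟩ := hconn.preconnected.exists_adj_of_nontrivial hconn.nonempty.some
  exact hf.ne_of_adj hvw (Subsingleton.elim _ _)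

lemma SimpleGraph.Coloring.isIMVColoring_of_dist_le_three (C : G.Coloring (Fin 2))
    (hdiam : ∀ u v, G.dist u v ≤ 3) : IsIMVColoring G C := by
  refine fun i => ⟨fun x hx y hy h => C.valid h (hx.trans hy.symm), fun x hx y hy hne hr => ?_⟩
  obtain ⟨p, hp⟩ := hr.exists_walk_length_eq_dist
  have hcol : C x = C y := hx.trans hy.symm
  have hlen : p.length = 2 := by
    have heven : Even p.length := by
      simpa [hcol] using C.eq_getVert_iff_even p p.length
    have := hr.pos_dist_of_ne hne
    have := hdiam x y
    rcases heven with ⟨m, hm⟩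
    omega
  refine ⟨p, hp, fun z hz hzx hzy hzi => ?_⟩
  obtain ⟨n, rfl, hn⟩ := Walk.mem_support_iff_exists_getVert.mp hz
  have hn1 : n = 1 := by
    rcases (by omega : n = 0 ∨ n = 1 ∨ n = 2) with rfl | rfl | rfl
    · exact absurd p.getVert_zero hzx
    · rfl
    · exact absurd (hlen ▸ p.getVert_length) hzy
  subst hn1
  have := (C.eq_getVert_iff_even p 1).mp (hx.trans hzi.symm)
  simp [hlen] at this

lemma IsIMVColoring.dist_le_three {f : V → Fin 2} (hf : IsIMVColoring G f) (u v : V) :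
    G.dist u v ≤ 3 := by
  by_contra! hfar
  obtain ⟨p, hp⟩ :=
    (Reachable.of_dist_ne_zero (by omega : G.dist u v ≠ 0)).exists_walk_length_eq_dist
  set w := p.getVert 4
  have huw : G.dist u w = 4 := by
    rw [Walk.dist_getVert_left hp]; omega
  have hcol : f u = f w := (hf.toColoring.eq_getVert_iff_even p 4).mpr
    (by rw [min_eq_left (by omega)]; decide)
  obtain ⟨q, hq, hvis⟩ := (hf (f u)).2 u rfl w hcol.symm
    (fun h => by simp [h] at huw) (Reachable.of_dist_ne_zero (by omega))
  have hmid : f u = f (q.getVert 2) := (hf.toColoring.eq_getVert_iff_even q 2).mpr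
    (by rw [min_eq_left (by omega)]; decide)
  have hub := Walk.dist_getVert_left hq 2
  have hbw := Walk.dist_getVert_right hq 2
  rw [hq, huw] at hub hbw
  refine hvis _ (q.getVert_mem_support 2) (fun h => ?_) (fun h => ?_) hmid.symm
  · simp [h] at hub
  · simp [h] at hbw

end

theorem stmt11 (G : SimpleGraph V) (hconn : G.Connected) :
    imvChrom G = 2 ↔
      (G.Colorable 2 ∧ (∃ u v : V, u ≠ v) ∧ ∀ u v : V, G.dist u v ≤ 3) := by
  rw [imvChrom_eq_succ_iff, hconn.exists_isIMVColoring_fin_one_iff,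
    not_subsingleton_iff_nontrivial, ← nontrivial_iff]
  constructor
  · rintro ⟨⟨f, hf⟩, hV⟩
    exact ⟨⟨hf.toColoring⟩, hV, hf.dist_le_three⟩
  · rintro ⟨⟨C⟩, hV, hdiam⟩
    exact ⟨⟨C, C.isIMVColoring_of_dist_le_three hdiam⟩, hV⟩
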